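/- arXiv:2405.20286 — 6 statements merged into one kernel-verified Lean document; each statement's English description precedes it below -/
import Mathlib

section
/- A connected graph H has a fractional P3-decomposition if and only if for every edge subset F of H, the number of connected components of H minus F that are isomorphic to P2 (a single edge with its two endpoints) is at most |F|. -/
open scoped Classical

noncomputable section

variable {V : Type*}

/-- `K` is a `P₃`-subgraph of `G`: an unordered pair of distinct incident edges of `G`. -/
def SimpleGraph.IsP3Sub (G : SimpleGraph V) (K : Sym2 (Sym2 V)) : Prop :=
  ∃ e₁ e₂ : Sym2 V, K = s(e₁, e₂) ∧ e₁ ∈ G.edgeSet ∧ e₂ ∈ G.edgeSet ∧ e₁ ≠ e₂ ∧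
    ∃ v : V, v ∈ e₁ ∧ v ∈ e₂

/-- A fractional `P₃`-decomposition of `G`. -/
def SimpleGraph.HasFracP3Decomp [Fintype V] (G : SimpleGraph V) : Prop :=
  ∃ f : Sym2 (Sym2 V) → ℝ,
    (∀ K, 0 ≤ f K ∧ f K ≤ 1) ∧
    ∀ e ∈ G.edgeSet,
      (∑ K ∈ Finset.univ.filter (fun K : Sym2 (Sym2 V) => G.IsP3Sub K ∧ e ∈ K), f K) = 1

/-- A connected component is an isolated `P₂`: a single edge together with its two endpoints. -/
def SimpleGraph.IsP2Component (G : SimpleGraph V) (c : G.ConnectedComponent) : Prop :=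
  ∃ u v : V, G.Adj u v ∧ c.supp = {u, v}

/-- An edge `e` of `H` that is "isolated" relative to an edge set `F`: it is not in `F`
and every other edge of `H` sharing a vertex with it lies in `F`. -/
def EdgeIso (H : SimpleGraph V) (F : Set (Sym2 V)) (e : Sym2 V) : Prop :=
  e ∈ H.edgeSet ∧ e ∉ F ∧ ∀ g ∈ H.edgeSet, g ≠ e → (∃ w, w ∈ g ∧ w ∈ e) → g ∈ F

lemma edgeIso_step {H : SimpleGraph V} {F : Set (Sym2 V)} {u v : V}
    (he : EdgeIso H F s(u, v)) {y z : V} (hy : y = u ∨ y = v)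
    (hadj : (H.deleteEdges F).Adj y z) : z = u ∨ z = v := by
  rw [SimpleGraph.deleteEdges_adj] at hadj
  by_cases hg : s(y, z) = s(u, v)
  · rw [Sym2.eq_iff] at hg
    rcases hg with ⟨rfl, rfl⟩ | ⟨rfl, rfl⟩
    · exact Or.inr rfl
    · exact Or.inl rfl
  · exact absurd (he.2.2 s(y, z) (H.mem_edgeSet.mpr hadj.1) hg
      ⟨y, Sym2.mem_mk_left y z, by rcases hy with rfl | rfl <;> simp⟩) hadj.2

lemma supp_of_edgeIso {H : SimpleGraph V} {F : Set (Sym2 V)} {u v : V}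
    (he : EdgeIso H F s(u, v)) :
    ((H.deleteEdges F).connectedComponentMk u).supp = {u, v} := by
  have hadj : H.Adj u v := H.mem_edgeSet.mp he.1
  have hGadj : (H.deleteEdges F).Adj u v := by
    rw [SimpleGraph.deleteEdges_adj]; exact ⟨hadj, he.2.1⟩
  apply Set.Subset.antisymm
  · intro x hx
    rw [SimpleGraph.ConnectedComponent.mem_supp_iff, SimpleGraph.ConnectedComponent.eq] at hx
    obtain ⟨p⟩ := hx.symm
    have : ∀ {y x : V} (_ : (H.deleteEdges F).Walk y x), y = u ∨ y = v → x = u ∨ x = v := by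
      intro y x p
      induction p with
      | nil => exact id
      | cons h q ih => intro hy; exact ih (edgeIso_step he hy h)
    rcases this p (Or.inl rfl) with rfl | rfl
    · exact Set.mem_insert _ _
    · exact Set.mem_insert_of_mem _ rfl
  · intro x hx
    rcases hx with rfl | hx
    · rw [SimpleGraph.ConnectedComponent.mem_supp_iff]
    · rcases hx with rfl
      rw [SimpleGraph.ConnectedComponent.mem_supp_iff, SimpleGraph.ConnectedComponent.eq]
      exact hGadj.symm.reachable

lemma isP2Component_of_edgeIso {H : SimpleGraph V} {F : Set (Sym2 V)} {u v : V}
    (he : EdgeIso H F s(u, v)) :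
    (H.deleteEdges F).IsP2Component ((H.deleteEdges F).connectedComponentMk u) := by
  have hadj : H.Adj u v := H.mem_edgeSet.mp he.1
  exact ⟨u, v, by rw [SimpleGraph.deleteEdges_adj]; exact ⟨hadj, he.2.1⟩, supp_of_edgeIso he⟩

lemma edgeIso_of_p2Component {H : SimpleGraph V} {F : Set (Sym2 V)}
    {c : (H.deleteEdges F).ConnectedComponent} (hc : (H.deleteEdges F).IsP2Component c) :
    ∃ u v : V, c.supp = {u, v} ∧ EdgeIso H F s(u, v) := by
  obtain ⟨u, v, hadj, hsupp⟩ := hc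
  rw [SimpleGraph.deleteEdges_adj] at hadj
  refine ⟨u, v, hsupp, H.mem_edgeSet.mpr hadj.1, hadj.2, ?_⟩
  intro g hg hne ⟨w, hwg, hwuv⟩
  by_contra hgF
  obtain ⟨z, rfl⟩ := Sym2.mem_iff_exists.mp hwg
  have hwz : (H.deleteEdges F).Adj w z := by
    rw [SimpleGraph.deleteEdges_adj]; exact ⟨H.mem_edgeSet.mp hg, hgF⟩
  have hw : w = u ∨ w = v := by rwa [Sym2.mem_iff] at hwuv
  have hwc : w ∈ c.supp := by rw [hsupp]; rcases hw with rfl | rfl <;> simp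
  have hzc : z ∈ c.supp := by
    rw [SimpleGraph.ConnectedComponent.mem_supp_iff] at hwc ⊢
    rw [← hwc, SimpleGraph.ConnectedComponent.eq]
    exact hwz.symm.reachable
  rw [hsupp] at hzc
  have hz : z = u ∨ z = v := by simpa using hzc
  rcases hw with rfl | rfl
  · rcases hz with rfl | rfl
    · exact hwz.ne rfl
    · exact hne rfl
  · rcases hz with rfl | rfl
    · exact hne (Sym2.eq_swap)
    · exact hwz.ne rfl

lemma pair_set_eq_sym2 {u v u' v' : V} (h : ({u, v} : Set V) = {u', v'}) (hne : u ≠ v) :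
    s(u, v) = s(u', v') := by
  have hu : u = u' ∨ u = v' := by
    have : u ∈ ({u', v'} : Set V) := h ▸ Set.mem_insert _ _
    simpa using this
  have hv : v = u' ∨ v = v' := by
    have : v ∈ ({u', v'} : Set V) := h ▸ Set.mem_insert_of_mem _ rfl
    simpa using this
  rcases hu with rfl | rfl
  · rcases hv with rfl | rfl
    · exact absurd rfl hne
    · rfl
  · rcases hv with rfl | rfl
    · exact Sym2.eq_swap
    · exact absurd rfl hne

lemma ncomp_le_card_iso [Fintype V] (H : SimpleGraph V) (F : Set (Sym2 V)) :
    Nat.card {c : (H.deleteEdges F).ConnectedComponent // (H.deleteEdges F).IsP2Component c}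
      ≤ (Finset.univ.filter (fun e : Sym2 V => EdgeIso H F e)).card := by
  classical
  set E' := Finset.univ.filter (fun e : Sym2 V => EdgeIso H F e) with hE'
  have key : ∀ c : {c : (H.deleteEdges F).ConnectedComponent //
      (H.deleteEdges F).IsP2Component c}, ∃ p : V × V,
      (c : (H.deleteEdges F).ConnectedComponent).supp = {p.1, p.2} ∧ EdgeIso H F s(p.1, p.2) := by
    rintro ⟨c, hc⟩
    obtain ⟨u, v, hsupp, hiso⟩ := edgeIso_of_p2Component hc
    exact ⟨(u, v), hsupp, hiso⟩
  choose p hsupp hiso using key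
  have hinj : Function.Injective
      (fun c : {c : (H.deleteEdges F).ConnectedComponent //
        (H.deleteEdges F).IsP2Component c} =>
        (⟨s((p c).1, (p c).2), by simp [hE', Finset.mem_filter, hiso c]⟩ : {e // e ∈ E'})) := by
    intro c₁ c₂ hc
    simp only [Subtype.mk.injEq, Sym2.eq_iff] at hc
    have hss : ({(p c₁).1, (p c₁).2} : Set V) = {(p c₂).1, (p c₂).2} := by
      rcases hc with ⟨h1, h2⟩ | ⟨h1, h2⟩
      · rw [h1, h2]
      · rw [h1, h2, Set.pair_comm]
    have := (hsupp c₁).trans (hss.trans (hsupp c₂).symm)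
    exact Subtype.ext (SimpleGraph.ConnectedComponent.supp_injective this)
  calc Nat.card {c : (H.deleteEdges F).ConnectedComponent //
      (H.deleteEdges F).IsP2Component c}
      = Fintype.card {c : (H.deleteEdges F).ConnectedComponent //
        (H.deleteEdges F).IsP2Component c} := Nat.card_eq_fintype_card
    _ ≤ Fintype.card {e // e ∈ E'} := Fintype.card_le_of_injective _ hinj
    _ = E'.card := Fintype.card_coe E'

lemma card_iso_le_ncomp [Fintype V] (H : SimpleGraph V) (F : Set (Sym2 V))
    (A : Finset (Sym2 V)) (hA : ∀ e ∈ A, EdgeIso H F e) :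
    A.card ≤ Nat.card {c : (H.deleteEdges F).ConnectedComponent //
      (H.deleteEdges F).IsP2Component c} := by
  classical
  have key : ∀ e : {e // e ∈ A}, ∃ q : V × V, (e : Sym2 V) = s(q.1, q.2) := by
    rintro ⟨e, he⟩
    induction e with
    | _ u v => exact ⟨(u, v), rfl⟩
  choose q hq using key
  have hiso : ∀ e : {e // e ∈ A}, EdgeIso H F s((q e).1, (q e).2) := by
    intro e; rw [← hq e]; exact hA _ e.2
  have hne : ∀ e : {e // e ∈ A}, (q e).1 ≠ (q e).2 := by
    intro e
    exact (H.mem_edgeSet.mp (hiso e).1).ne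
  have hinj : Function.Injective (fun e : {e // e ∈ A} =>
      (⟨(H.deleteEdges F).connectedComponentMk (q e).1,
        isP2Component_of_edgeIso (hiso e)⟩ :
        {c : (H.deleteEdges F).ConnectedComponent //
          (H.deleteEdges F).IsP2Component c})) := by
    intro e₁ e₂ hc
    simp only [Subtype.mk.injEq] at hc
    have h1 := supp_of_edgeIso (hiso e₁)
    have h2 := supp_of_edgeIso (hiso e₂)
    rw [hc, h2] at h1
    exact Subtype.ext ((hq e₁).trans ((pair_set_eq_sym2 h1 (hne e₂)).symm.trans (hq e₂).symm))
  calc A.card = Fintype.card {e // e ∈ A} := (Fintype.card_coe A).symm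
    _ ≤ Fintype.card {c : (H.deleteEdges F).ConnectedComponent //
        (H.deleteEdges F).IsP2Component c} := Fintype.card_le_of_injective _ hinj
    _ = Nat.card _ := Nat.card_eq_fintype_card.symm

lemma sum_biUnion_le_of_nonneg {α β : Type*} [DecidableEq β] {f : β → ℝ}
    (hf : ∀ b, 0 ≤ f b) (s : Finset α) (t : α → Finset β) :
    ∑ b ∈ s.biUnion t, f b ≤ ∑ a ∈ s, ∑ b ∈ t a, f b := by
  classical
  induction s using Finset.induction with
  | empty => simp
  | @insert a s ha ih =>
    rw [Finset.biUnion_insert, Finset.sum_insert ha]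
    have h1 : ∑ b ∈ t a ∪ s.biUnion t, f b ≤ ∑ b ∈ t a, f b + ∑ b ∈ s.biUnion t, f b := by
      have := Finset.sum_union_inter (s₁ := t a) (s₂ := s.biUnion t) (f := f)
      have h0 : 0 ≤ ∑ b ∈ t a ∩ s.biUnion t, f b := Finset.sum_nonneg fun b _ => hf b
      linarith
    exact h1.trans (by linarith)

lemma card_iso_le_card_F [Fintype V] (H : SimpleGraph V) (F : Finset (Sym2 V))
    (hFE : ↑F ⊆ H.edgeSet) (f : Sym2 (Sym2 V) → ℝ) (hf01 : ∀ K, 0 ≤ f K ∧ f K ≤ 1)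
    (hfsum : ∀ e ∈ H.edgeSet,
      (∑ K ∈ Finset.univ.filter (fun K : Sym2 (Sym2 V) => H.IsP3Sub K ∧ e ∈ K), f K) = 1) :
    (Finset.univ.filter (fun e : Sym2 V => EdgeIso H (↑F) e)).card ≤ F.card := by
  classical
  set T : Sym2 V → Finset (Sym2 (Sym2 V)) :=
    fun e => Finset.univ.filter (fun K : Sym2 (Sym2 V) => H.IsP3Sub K ∧ e ∈ K) with hT
  set E' := Finset.univ.filter (fun e : Sym2 V => EdgeIso H (↑F) e) with hE'
  have hE'mem : ∀ e ∈ E', EdgeIso H (↑F) e := fun e he => (Finset.mem_filter.mp he).2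
  -- pairwise disjointness of T on E'
  have hdisj : (E' : Set (Sym2 V)).PairwiseDisjoint T := by
    intro e he e' he' hne
    simp only [Finset.disjoint_left]
    intro K hK hK'
    rw [hT, Finset.mem_filter] at hK hK'
    obtain ⟨⟨e₁, e₂, rfl, he₁, he₂, hne12, w, hw1, hw2⟩, hmem⟩ := hK.2
    have hmem' := hK'.2.2
    rw [Sym2.mem_iff] at hmem hmem'
    have hshare : (∃ w, w ∈ e ∧ w ∈ e') ∨ (∃ w, w ∈ e' ∧ w ∈ e) := by
      rcases hmem with rfl | rfl <;> rcases hmem' with rfl | rfl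
      · exact absurd rfl hne
      · exact Or.inl ⟨w, hw1, hw2⟩
      · exact Or.inr ⟨w, hw1, hw2⟩
      · exact absurd rfl hne
    have hie := hE'mem e he
    have hie' := hE'mem e' he'
    rcases hshare with ⟨w, hwe, hwe'⟩ | ⟨w, hwe', hwe⟩
    · exact hie.2.1 (hie'.2.2 e hie.1 hne ⟨w, hwe, hwe'⟩)
    · exact hie'.2.1 (hie.2.2 e' hie'.1 hne.symm ⟨w, hwe', hwe⟩)
  have hsub : E'.biUnion T ⊆ F.biUnion T := by
    intro K hK
    rw [Finset.mem_biUnion] at hK ⊢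
    obtain ⟨e, he, hKe⟩ := hK
    rw [hT, Finset.mem_filter] at hKe
    obtain ⟨⟨e₁, e₂, hKeq, he₁, he₂, hne12, w, hw1, hw2⟩, hmem⟩ := hKe.2
    have hie := hE'mem e he
    rw [hKeq, Sym2.mem_iff] at hmem
    have : ∃ g, g ∈ H.edgeSet ∧ g ≠ e ∧ (∃ w, w ∈ g ∧ w ∈ e) ∧ g ∈ K := by
      rcases hmem with rfl | rfl
      · exact ⟨e₂, he₂, fun h => hne12 h.symm, ⟨w, hw2, hw1⟩, by rw [hKeq]; simp⟩
      · exact ⟨e₁, he₁, hne12, ⟨w, hw1, hw2⟩, by rw [hKeq]; simp⟩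
    obtain ⟨g, hg, hgne, hgsh, hgK⟩ := this
    have hgF : g ∈ (↑F : Set (Sym2 V)) := hie.2.2 g hg hgne hgsh
    exact ⟨g, by exact_mod_cast hgF, by
      rw [hT, Finset.mem_filter]
      exact ⟨Finset.mem_univ _, ⟨e₁, e₂, hKeq, he₁, he₂, hne12, w, hw1, hw2⟩, hgK⟩⟩
  have hnn : ∀ K, 0 ≤ f K := fun K => (hf01 K).1
  have step1 : (E'.card : ℝ) = ∑ e ∈ E', ∑ K ∈ T e, f K := by
    rw [Finset.card_eq_sum_ones]
    push_cast
    refine Finset.sum_congr rfl fun e he => ?_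
    rw [hfsum e (hE'mem e he).1]
  have step2 : ∑ e ∈ E', ∑ K ∈ T e, f K = ∑ K ∈ E'.biUnion T, f K :=
    (Finset.sum_biUnion hdisj).symm
  have step3 : ∑ K ∈ E'.biUnion T, f K ≤ ∑ K ∈ F.biUnion T, f K :=
    Finset.sum_le_sum_of_subset_of_nonneg hsub fun K _ _ => hnn K
  have step4 : ∑ K ∈ F.biUnion T, f K ≤ ∑ e ∈ F, ∑ K ∈ T e, f K :=
    sum_biUnion_le_of_nonneg hnn F T
  have step5 : ∑ e ∈ F, ∑ K ∈ T e, f K = (F.card : ℝ) := by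
    rw [Finset.card_eq_sum_ones]
    push_cast
    refine Finset.sum_congr rfl fun e he => ?_
    exact hfsum e (hFE he)
  have : (E'.card : ℝ) ≤ (F.card : ℝ) := by
    rw [step1, step2]; rw [step5] at step4; linarith
  exact_mod_cast this

lemma hall_condition [Fintype V] (H : SimpleGraph V)
    (hcond : ∀ F : Finset (Sym2 V), ↑F ⊆ H.edgeSet →
        Nat.card {c : (H.deleteEdges ↑F).ConnectedComponent //
            (H.deleteEdges ↑F).IsP2Component c} ≤ F.card)
    (A : Finset {e : Sym2 V // e ∈ H.edgeSet}) :
    A.card ≤ (A.biUnion (fun a => Finset.univ.filter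
      (fun b : {e : Sym2 V // e ∈ H.edgeSet} =>
        b ≠ a ∧ ∃ w, w ∈ (a : Sym2 V) ∧ w ∈ (b : Sym2 V)))).card := by
  classical
  set nbr : {e : Sym2 V // e ∈ H.edgeSet} → Finset {e : Sym2 V // e ∈ H.edgeSet} :=
    fun a => Finset.univ.filter
      (fun b : {e : Sym2 V // e ∈ H.edgeSet} =>
        b ≠ a ∧ ∃ w, w ∈ (a : Sym2 V) ∧ w ∈ (b : Sym2 V)) with hnbr
  by_contra hlt
  push_neg at hlt
  set N := A.biUnion nbr with hN
  set S := N \ A with hS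
  set A₀ := A.filter (fun a => ∀ b ∈ A, b ∉ nbr a) with hA₀
  set F : Finset (Sym2 V) := S.image Subtype.val with hF
  have hFsub : (↑F : Set (Sym2 V)) ⊆ H.edgeSet := by
    intro x hx
    simp only [hF, Finset.coe_image, Set.mem_image, Finset.mem_coe] at hx
    obtain ⟨a, _, rfl⟩ := hx
    exact a.2
  have hiso : ∀ a ∈ A₀, EdgeIso H (↑F) (a : Sym2 V) := by
    intro a ha
    rw [hA₀, Finset.mem_filter] at ha
    obtain ⟨haA, hanb⟩ := ha
    refine ⟨a.2, ?_, ?_⟩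
    · intro hmem
      simp only [hF, Finset.coe_image, Set.mem_image, Finset.mem_coe] at hmem
      obtain ⟨b, hb, hba⟩ := hmem
      have : b = a := Subtype.ext hba
      subst this
      rw [hS, Finset.mem_sdiff] at hb
      exact hb.2 haA
    · intro g hg hgne hgsh
      set b : {e : Sym2 V // e ∈ H.edgeSet} := ⟨g, hg⟩ with hb
      have hbnbr : b ∈ nbr a := by
        rw [hnbr, Finset.mem_filter]
        refine ⟨Finset.mem_univ _, fun h => hgne (congrArg Subtype.val h), ?_⟩
        obtain ⟨w, hwg, hwa⟩ := hgsh
        exact ⟨w, hwa, hwg⟩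
      have hbN : b ∈ N := Finset.mem_biUnion.mpr ⟨a, haA, hbnbr⟩
      have hbA : b ∉ A := fun h => hanb b h hbnbr
      have hbS : b ∈ S := by rw [hS, Finset.mem_sdiff]; exact ⟨hbN, hbA⟩
      simp only [hF, Finset.coe_image, Set.mem_image, Finset.mem_coe]
      exact ⟨b, hbS, rfl⟩
  have hA₀card : A₀.card ≤ F.card := by
    have h1 : (A₀.image Subtype.val).card = A₀.card :=
      Finset.card_image_of_injective _ Subtype.val_injective
    have h2 : ∀ e ∈ A₀.image Subtype.val, EdgeIso H (↑F) e := by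
      intro e he
      obtain ⟨a, ha, rfl⟩ := Finset.mem_image.mp he
      exact hiso a ha
    calc A₀.card = (A₀.image Subtype.val).card := h1.symm
      _ ≤ Nat.card {c : (H.deleteEdges ↑F).ConnectedComponent //
          (H.deleteEdges ↑F).IsP2Component c} := card_iso_le_ncomp H ↑F _ h2
      _ ≤ F.card := hcond F hFsub
  have hFS : F.card = S.card := Finset.card_image_of_injective _ Subtype.val_injective
  have hAA₀ : (A \ A₀) ⊆ N ∩ A := by
    intro a ha
    rw [Finset.mem_sdiff] at ha
    obtain ⟨haA, hnA₀⟩ := ha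
    rw [hA₀, Finset.mem_filter] at hnA₀
    push_neg at hnA₀
    obtain ⟨b, hbA, hbnbr⟩ := hnA₀ haA
    have hanbr : a ∈ nbr b := by
      rw [hnbr, Finset.mem_filter] at hbnbr ⊢
      obtain ⟨-, hne, w, hwa, hwb⟩ := hbnbr
      exact ⟨Finset.mem_univ _, fun h => hne h.symm, ⟨w, hwb, hwa⟩⟩
    exact Finset.mem_inter.mpr ⟨Finset.mem_biUnion.mpr ⟨b, hbA, hanbr⟩, haA⟩
  have e1 : (A \ A₀).card + (A ∩ A₀).card = A.card := Finset.card_sdiff_add_card_inter A A₀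
  have e2 : A ∩ A₀ = A₀ := Finset.inter_eq_right.mpr (Finset.filter_subset _ _)
  have e3 : (N \ A).card + (N ∩ A).card = N.card := Finset.card_sdiff_add_card_inter N A
  have e4 : (A \ A₀).card ≤ (N ∩ A).card := Finset.card_le_card hAA₀
  rw [e2] at e1
  have e5 : S.card = (N \ A).card := by rw [hS]
  omega

lemma decomp_of_perm [Fintype V] (H : SimpleGraph V)
    (σ : {e : Sym2 V // e ∈ H.edgeSet} → {e : Sym2 V // e ∈ H.edgeSet})
    (hbij : Function.Bijective σ)
    (hgood : ∀ a, σ a ≠ a ∧ ∃ w, w ∈ (a : Sym2 V) ∧ w ∈ (σ a : Sym2 V)) :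
    H.HasFracP3Decomp := by
  classical
  have hvalne : ∀ a : {e : Sym2 V // e ∈ H.edgeSet}, ((a : Sym2 V)) ≠ ((σ a : Sym2 V)) := by
    intro a h
    exact (hgood a).1 (Subtype.ext h.symm)
  have hP3 : ∀ a : {e : Sym2 V // e ∈ H.edgeSet}, H.IsP3Sub s((a : Sym2 V), (σ a : Sym2 V)) := by
    intro a
    obtain ⟨w, hw1, hw2⟩ := (hgood a).2
    exact ⟨a, σ a, rfl, a.2, (σ a).2, hvalne a, w, hw1, hw2⟩
  set g : {e : Sym2 V // e ∈ H.edgeSet} → Sym2 (Sym2 V) := fun a => s((a : Sym2 V), (σ a : Sym2 V)) with hg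
  refine ⟨fun K => ((Finset.univ.filter (fun a : {e : Sym2 V // e ∈ H.edgeSet} => g a = K)).card : ℝ) / 2, ?_, ?_⟩
  · intro K
    constructor
    · positivity
    · rw [div_le_one (by norm_num)]
      by_cases hne : (Finset.univ.filter (fun a : {e : Sym2 V // e ∈ H.edgeSet} => g a = K)).Nonempty
      · obtain ⟨a, ha⟩ := hne
        have haK : g a = K := (Finset.mem_filter.mp ha).2
        have hsub : (Finset.univ.filter (fun a : {e : Sym2 V // e ∈ H.edgeSet} => g a = K)) ⊆ {a, σ a} := by
          intro a' ha'
          have ha'K : g a' = K := (Finset.mem_filter.mp ha').2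
          rw [← haK, hg, Sym2.eq_iff] at ha'K
          simp only [Finset.mem_insert, Finset.mem_singleton]
          rcases ha'K with ⟨h1, _⟩ | ⟨h1, h2⟩
          · exact Or.inl (Subtype.ext h1)
          · exact Or.inr (Subtype.ext h1)
        calc ((Finset.univ.filter (fun a : {e : Sym2 V // e ∈ H.edgeSet} => g a = K)).card : ℝ)
            ≤ (({a, σ a} : Finset {e : Sym2 V // e ∈ H.edgeSet}).card : ℝ) := by
              exact_mod_cast Finset.card_le_card hsub
          _ ≤ 2 := by
              have := Finset.card_insert_le a ({σ a} : Finset {e : Sym2 V // e ∈ H.edgeSet})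
              have h1 : ({σ a} : Finset {e : Sym2 V // e ∈ H.edgeSet}).card = 1 := Finset.card_singleton _
              exact_mod_cast by omega
      · rw [Finset.not_nonempty_iff_eq_empty] at hne
        rw [hne]; norm_num
  · intro e he
    set T := Finset.univ.filter (fun K : Sym2 (Sym2 V) => H.IsP3Sub K ∧ e ∈ K) with hT
    set s₀ := Finset.univ.filter (fun a : {e : Sym2 V // e ∈ H.edgeSet} => g a ∈ T) with hs₀
    have hfiber : s₀.card = ∑ K ∈ T, (s₀.filter (fun a => g a = K)).card :=
      Finset.card_eq_sum_card_fiberwise (fun a ha => (Finset.mem_filter.mp ha).2)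
    have hfib_eq : ∀ K ∈ T, s₀.filter (fun a => g a = K)
        = Finset.univ.filter (fun a : {e : Sym2 V // e ∈ H.edgeSet} => g a = K) := by
      intro K hK
      ext a
      simp only [hs₀, Finset.mem_filter, Finset.mem_univ, true_and]
      constructor
      · rintro ⟨-, h⟩; exact h
      · intro h; exact ⟨h ▸ hK, h⟩
    -- identify s₀
    set ehat : {e : Sym2 V // e ∈ H.edgeSet} := ⟨e, he⟩ with hehat
    obtain ⟨τ, hτ⟩ := hbij.2 ehat
    have hτne : τ ≠ ehat := by
      intro h
      rw [h] at hτ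
      exact (hgood ehat).1 hτ
    have hs₀eq : s₀ = {ehat, τ} := by
      ext a
      simp only [hs₀, hT, Finset.mem_filter, Finset.mem_univ, true_and,
        Finset.mem_insert, Finset.mem_singleton]
      constructor
      · rintro ⟨-, hmem⟩
        rw [hg, Sym2.mem_iff] at hmem
        rcases hmem with h | h
        · exact Or.inl (Subtype.ext h.symm)
        · refine Or.inr (hbij.1 ?_)
          rw [hτ]
          exact Subtype.ext h.symm
      · intro h
        refine ⟨hP3 a, ?_⟩
        rw [hg, Sym2.mem_iff]
        rcases h with rfl | rfl
        · exact Or.inl rfl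
        · exact Or.inr (by rw [hτ])
    have hs₀card : s₀.card = 2 := by
      rw [hs₀eq, Finset.card_insert_of_notMem (by simpa using hτne.symm),
        Finset.card_singleton]
    calc ∑ K ∈ T, ((Finset.univ.filter (fun a : {e : Sym2 V // e ∈ H.edgeSet} => g a = K)).card : ℝ) / 2
        = (∑ K ∈ T, ((Finset.univ.filter (fun a : {e : Sym2 V // e ∈ H.edgeSet} => g a = K)).card : ℝ)) / 2 := by
          rw [Finset.sum_div]
      _ = ((∑ K ∈ T, (Finset.univ.filter (fun a : {e : Sym2 V // e ∈ H.edgeSet} => g a = K)).card : ℕ) : ℝ) / 2 := by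
          push_cast; ring
      _ = ((s₀.card : ℕ) : ℝ) / 2 := by
          rw [hfiber]
          congr 1
          exact_mod_cast (Finset.sum_congr rfl fun K hK => by rw [hfib_eq K hK]).symm
      _ = 1 := by rw [hs₀card]; norm_num


/-- A connected graph `H` has a fractional `P₃`-decomposition iff for every set `F` of edges,
the number of connected components of `H \ F` isomorphic to `P₂` is at most `|F|`. -/
theorem frac_p3_decomp_iff_p2_components_le [Fintype V] (H : SimpleGraph V)
    (hH : H.Connected) :
    H.HasFracP3Decomp ↔
      ∀ F : Finset (Sym2 V), ↑F ⊆ H.edgeSet →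
        Nat.card {c : (H.deleteEdges ↑F).ConnectedComponent //
            (H.deleteEdges ↑F).IsP2Component c} ≤ F.card := by
  constructor
  · rintro ⟨f, hf01, hfsum⟩ F hFE
    exact (ncomp_le_card_iso H ↑F).trans (card_iso_le_card_F H F hFE f hf01 hfsum)
  · intro hcond
    obtain ⟨σ, hσinj, hσmem⟩ :=
      (Finset.all_card_le_biUnion_card_iff_existsInjective'
        (fun a : {e : Sym2 V // e ∈ H.edgeSet} => Finset.univ.filter
          (fun b : {e : Sym2 V // e ∈ H.edgeSet} =>
            b ≠ a ∧ ∃ w, w ∈ (a : Sym2 V) ∧ w ∈ (b : Sym2 V)))).mp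
        (hall_condition H hcond)
    have hbij : Function.Bijective σ := Finite.injective_iff_bijective.mp hσinj
    refine decomp_of_perm H σ hbij fun a => ?_
    have := hσmem a
    rw [Finset.mem_filter] at this
    exact this.2
end
end

section
/- If H is a connected graph in T_k (a tree on 2k-1 edges formed by joining k disjoint copies of P2 with k-1 connecting edges), and F is the set of those k-1 connecting edges, then |F| < the number of isolated P2 components of H \ F; hence H has no fractional P3-decomposition. -/
/-!
Deleting `F` leaves a perfect matching `M` of `H`, one edge per component, so `|V| = 2|M|` and
`H \ F` has `|M|` components; as `H` is a tree, `|F| = |E(H)| - |M| = |M| - 1`.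
Two edges of `M` never meet, so a `P₃` of `H` through an edge of `M` consists of that edge and an
edge of `F`. Summing the weight equations over `M` thus counts each `P₃` at most once, and the
total is bounded by the same sum over `F`: a fractional decomposition would force `|M| ≤ |F|`.
-/

open scoped Classical

noncomputable section

variable {V : Type*}

/-- `G` belongs to the family `T_k`: `G` is a tree with a set `F` of `k-1` edges whose removal
leaves exactly `k` disjoint copies of `P₂` (isolated single edges) as connected components. -/
def SimpleGraph.InTk [Fintype V] (G : SimpleGraph V) (k : ℕ) : Prop :=
  G.IsTree ∧ ∃ F : Finset (Sym2 V), ↑F ⊆ G.edgeSet ∧ F.card = k - 1 ∧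
    (∀ c : (G.deleteEdges ↑F).ConnectedComponent, (G.deleteEdges ↑F).IsP2Component c) ∧
    Nat.card {c : (G.deleteEdges ↑F).ConnectedComponent //
      (G.deleteEdges ↑F).IsP2Component c} = k

theorem Finset.sum_biUnion_le_sum_sum {ι α M : Type*} [DecidableEq α] [AddCommMonoid M]
    [Preorder M] [AddLeftMono M] {s : Finset ι} {t : ι → Finset α} {f : α → M}
    (hf : ∀ a ∈ s.biUnion t, 0 ≤ f a) :
    ∑ a ∈ s.biUnion t, f a ≤ ∑ i ∈ s, ∑ a ∈ t i, f a := by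
  have himage : s.biUnion t = (s.sigma t).image Sigma.snd := by ext; simp
  rw [Finset.sum_sigma', himage]
  exact Finset.sum_image_le_of_nonneg (himage ▸ hf)

namespace SimpleGraph

variable {G H : SimpleGraph V}

theorem existsUnique_adj_of_forall_isP2Component (hall : ∀ c, G.IsP2Component c) (v : V) :
    ∃! w, G.Adj v w := by
  obtain ⟨x, y, hxy, hsupp⟩ := hall (G.connectedComponentMk v)
  have hmem : ∀ {z}, G.Reachable v z → z = x ∨ z = y := fun {z} hz => by
    have : z ∈ (G.connectedComponentMk v).supp := ConnectedComponent.sound hz.symm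
    simpa [hsupp] using this
  obtain rfl | rfl := hmem (Reachable.refl v)
  · exact ⟨y, hxy, fun w hw => (hmem hw.reachable).resolve_left hw.ne'⟩
  · exact ⟨x, hxy.symm, fun w hw => (hmem hw.reachable).resolve_right hw.ne'⟩

theorem card_eq_two_mul_card_edgeFinset [Fintype V] [DecidableEq V] [DecidableRel G.Adj]
    (h : ∀ v, ∃! w, G.Adj v w) : Fintype.card V = 2 * G.edgeFinset.card := by
  rw [← sum_degrees_eq_twice_card_edges]
  simp [degree_eq_one_iff_existsUnique_adj.mpr (h _)]

theorem card_eq_two_mul_card_connectedComponent [Fintype V] (hall : ∀ c, G.IsP2Component c) :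
    Fintype.card V = 2 * Nat.card G.ConnectedComponent := by
  rw [← Nat.card_eq_fintype_card, ← Nat.card_congr (Equiv.sigmaFiberEquiv G.connectedComponentMk),
    Nat.card_sigma, Nat.card_eq_fintype_card, ← Finset.card_univ, mul_comm, ← smul_eq_mul,
    ← Finset.sum_const]
  refine Finset.sum_congr rfl fun c _ => ?_
  obtain ⟨u, v, huv, hsupp⟩ := hall c
  change Nat.card c.supp = 2
  rw [Nat.card_coe_set_eq, hsupp, Set.ncard_pair huv.ne]

theorem eq_of_mem_edgeSet_of_mem (hmatch : ∀ v, (G.neighborSet v).Subsingleton)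
    {e₁ e₂ : Sym2 V} (h₁ : e₁ ∈ G.edgeSet) (h₂ : e₂ ∈ G.edgeSet) {v : V} (hv₁ : v ∈ e₁)
    (hv₂ : v ∈ e₂) : e₁ = e₂ := by
  obtain ⟨a, rfl⟩ := Sym2.mem_iff_exists.mp hv₁
  obtain ⟨b, rfl⟩ := Sym2.mem_iff_exists.mp hv₂
  obtain rfl : a = b := hmatch v h₁ h₂
  rfl

theorem IsP3Sub.exists_eq_mk_of_mem {F : Set (Sym2 V)} {K : Sym2 (Sym2 V)} {e : Sym2 V}
    (hmatch : ∀ v, ((H.deleteEdges F).neighborSet v).Subsingleton)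
    (hK : H.IsP3Sub K) (he : e ∈ (H.deleteEdges F).edgeSet) (heK : e ∈ K) :
    ∃ g ∈ F, K = s(e, g) := by
  obtain ⟨e₁, e₂, rfl, h₁, h₂, hne, v, hv₁, hv₂⟩ := hK
  have mem_F : ∀ {a b}, a ∈ (H.deleteEdges F).edgeSet → b ∈ H.edgeSet → a ≠ b → v ∈ a →
      v ∈ b → b ∈ F := fun ha hb hab hva hvb => by
    by_contra hbF
    refine hab (eq_of_mem_edgeSet_of_mem hmatch ha ?_ hva hvb)
    rw [edgeSet_deleteEdges]
    exact ⟨hb, hbF⟩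
  rcases Sym2.mem_iff.mp heK with rfl | rfl
  · exact ⟨e₂, mem_F he h₂ hne hv₁ hv₂, rfl⟩
  · exact ⟨e₁, mem_F he h₁ hne.symm hv₂ hv₁, Sym2.eq_swap⟩

theorem HasFracP3Decomp.card_edgeFinset_deleteEdges_le [Fintype V] (hH : H.HasFracP3Decomp)
    {F : Finset (Sym2 V)} (hF : ↑F ⊆ H.edgeSet)
    (hmatch : ∀ v, ((H.deleteEdges ↑F).neighborSet v).Subsingleton) :
    (H.deleteEdges ↑F).edgeFinset.card ≤ F.card := by
  obtain ⟨f, hf, hsum⟩ := hH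
  set G := H.deleteEdges ↑F
  set S : Sym2 V → Finset (Sym2 (Sym2 V)) := fun e => {K | H.IsP3Sub K ∧ e ∈ K}
  have mem_S : ∀ {K e}, K ∈ S e ↔ H.IsP3Sub K ∧ e ∈ K := by simp [S]
  have hS : ∀ e ∈ H.edgeSet, ∑ K ∈ S e, f K = 1 := hsum
  have hdisj : (G.edgeFinset : Set (Sym2 V)).PairwiseDisjoint S := by
    intro e₁ he₁ e₂ he₂ hne
    refine Finset.disjoint_left.mpr fun K hK₁ hK₂ => ?_
    obtain ⟨hK, he₁K⟩ := mem_S.mp hK₁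
    obtain ⟨g, hg, rfl⟩ := hK.exists_eq_mk_of_mem hmatch (mem_edgeFinset.mp he₁) he₁K
    rcases Sym2.mem_iff.mp (mem_S.mp hK₂).2 with rfl | rfl
    · exact hne rfl
    · simp [G, hg] at he₂
  have hcover : G.edgeFinset.biUnion S ⊆ F.biUnion S := by
    simp only [Finset.subset_iff, Finset.mem_biUnion]
    rintro K ⟨e, he, heK⟩
    obtain ⟨hK, heK⟩ := mem_S.mp heK
    obtain ⟨g, hg, rfl⟩ := hK.exists_eq_mk_of_mem hmatch (mem_edgeFinset.mp he) heK
    exact ⟨g, hg, mem_S.mpr ⟨hK, Sym2.mem_mk_right e g⟩⟩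
  have : (G.edgeFinset.card : ℝ) ≤ F.card := calc
    (G.edgeFinset.card : ℝ) = ∑ e ∈ G.edgeFinset, ∑ K ∈ S e, f K := by
        have hGH : G.edgeSet ⊆ H.edgeSet := edgeSet_mono (deleteEdges_le _)
        rw [Finset.sum_congr rfl fun e he => hS e (hGH (mem_edgeFinset.mp he))]
        simp
    _ = ∑ K ∈ G.edgeFinset.biUnion S, f K := (Finset.sum_biUnion hdisj).symm
    _ ≤ ∑ K ∈ F.biUnion S, f K :=
        Finset.sum_le_sum_of_subset_of_nonneg hcover fun K _ _ => (hf K).1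
    _ ≤ ∑ g ∈ F, ∑ K ∈ S g, f K := Finset.sum_biUnion_le_sum_sum fun K _ => (hf K).1
    _ = F.card := by
        rw [Finset.sum_congr rfl fun g hg => hS g (hF hg)]
        simp
  exact_mod_cast this

end SimpleGraph

theorem inTk_no_frac_p3_decomp_general [Fintype V] (H : SimpleGraph V)
    (htree : H.IsTree) (F : Finset (Sym2 V)) (hF : ↑F ⊆ H.edgeSet)
    (hall : ∀ c : (H.deleteEdges ↑F).ConnectedComponent,
      (H.deleteEdges ↑F).IsP2Component c) :
    F.card < Nat.card {c : (H.deleteEdges ↑F).ConnectedComponent //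
        (H.deleteEdges ↑F).IsP2Component c} ∧
      ¬ H.HasFracP3Decomp := by
  have hunique := SimpleGraph.existsUnique_adj_of_forall_isP2Component hall
  have hV_edges := SimpleGraph.card_eq_two_mul_card_edgeFinset hunique
  have hV_components := SimpleGraph.card_eq_two_mul_card_connectedComponent hall
  have hV_tree := htree.card_edgeFinset
  have hedges : (H.deleteEdges ↑F).edgeFinset.card + F.card = H.edgeFinset.card := by
    rw [SimpleGraph.edgeFinset_deleteEdges, Finset.card_sdiff_add_card_eq_card]
    exact fun g hg => SimpleGraph.mem_edgeFinset.mpr (hF hg)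
  rw [Nat.card_congr (Equiv.subtypeUnivEquiv hall)]
  refine ⟨by omega, fun hfrac => ?_⟩
  have := hfrac.card_edgeFinset_deleteEdges_le hF fun v _ ha _ hb => (hunique v).unique ha hb
  omega

/-- If `H ∈ T_k`, witnessed by the set `F` of the `k-1` connecting edges, then
`|F|` is strictly less than the number of isolated `P₂` components of `H \ F`;
hence `H` has no fractional `P₃`-decomposition. -/
theorem inTk_no_frac_p3_decomp [Fintype V] (H : SimpleGraph V) (k : ℕ) (hk : 1 ≤ k)
    (htree : H.IsTree) (F : Finset (Sym2 V)) (hF : ↑F ⊆ H.edgeSet) (hFcard : F.card = k - 1)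
    (hall : ∀ c : (H.deleteEdges ↑F).ConnectedComponent,
      (H.deleteEdges ↑F).IsP2Component c) :
    F.card < Nat.card {c : (H.deleteEdges ↑F).ConnectedComponent //
        (H.deleteEdges ↑F).IsP2Component c} ∧
      ¬ H.HasFracP3Decomp :=
  inTk_no_frac_p3_decomp_general H htree F hF hall
end
end

section
/- Let G be a symmetric two-player game and H a graph. The optimal classical value of the n-player game G^H (where players sit at vertices of H and a uniformly random edge plays G) equals the optimal classical value ω(G) of the two-player game G if and only if there exists a graph homomorphism from H to the strategy graph S_G of G. -/
open scoped Classical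

noncomputable section

/-- A symmetric two-player nonlocal game with question set `I` (uniformly distributed)
and answer set `O`: a winning predicate invariant under swapping the two players. -/
structure SymGame (I O : Type*) where
  win : I → I → O → O → Prop
  symm : ∀ x₁ x₂ a₁ a₂, win x₁ x₂ a₁ a₂ ↔ win x₂ x₁ a₂ a₁

variable {I O V : Type*}

/-- The winning probability of the pair of deterministic strategies `(fA, fB)` in the
game `G`, with questions drawn uniformly and independently. -/
def SymGame.pairValue [Fintype I] (G : SymGame I O) (fA fB : I → O) : ℝ :=
  (∑ x₁ : I, ∑ x₂ : I, if G.win x₁ x₂ (fA x₁) (fB x₂) then (1 : ℝ) else 0) /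
    (Fintype.card I) ^ 2

/-- The optimal classical value `ω(G)`: the best winning probability over pairs of
deterministic strategies. -/
def SymGame.classicalValue [Fintype I] (G : SymGame I O) : ℝ :=
  ⨆ p : (I → O) × (I → O), G.pairValue p.1 p.2

/-- The adjacency relation of the strategy graph `S_G`: two deterministic strategies are
adjacent (loops allowed) iff the pair achieves the optimal classical value `ω(G)`. -/
def SymGame.stratAdj [Fintype I] (G : SymGame I O) (fA fB : I → O) : Prop :=
  G.pairValue fA fB = G.classicalValue

/-- The value of the `n`-player game `G^H` under the assignment `φ` of deterministic
strategies to the vertices of `H`: the average over the edges of `H` of the two-player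
winning probability on that edge. -/
def SymGame.graphValue [Fintype I] [Fintype V] (G : SymGame I O) (H : SimpleGraph V)
    (φ : V → I → O) : ℝ :=
  (∑ p ∈ Finset.univ.filter (fun p : V × V => H.Adj p.1 p.2),
      G.pairValue (φ p.1) (φ p.2)) / (2 * H.edgeFinset.card)

/-- The optimal classical value of the game `G^H`. -/
def SymGame.classicalGraphValue [Fintype I] [Fintype V] (G : SymGame I O)
    (H : SimpleGraph V) : ℝ :=
  ⨆ φ : V → I → O, G.graphValue H φ
lemma pairValue_le [Fintype I] [Fintype O] (G : SymGame I O) (fA fB : I → O) :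
    G.pairValue fA fB ≤ G.classicalValue :=
  le_ciSup (f := fun p : (I → O) × (I → O) => G.pairValue p.1 p.2)
    (Set.Finite.bddAbove (Set.finite_range _)) (fA, fB)

/-- The optimal classical value of `G^H` equals the optimal classical value of `G` iff
there is a graph homomorphism from `H` to the strategy graph `S_G` of `G`. -/
theorem classicalGraphValue_eq_iff_hom [Fintype I] [Fintype O] [Nonempty I] [Nonempty O]
    [Fintype V] (G : SymGame I O) (H : SimpleGraph V) (hne : H.edgeFinset.Nonempty) :
    G.classicalGraphValue H = G.classicalValue ↔
      ∃ φ : V → I → O, ∀ u w : V, H.Adj u w → G.stratAdj (φ u) (φ w) := by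
  have hV : Nonempty V := by
    obtain ⟨e, he⟩ := hne
    exact ⟨e.out.1⟩
  set s : Finset (V × V) := Finset.univ.filter (fun p : V × V => H.Adj p.1 p.2) with hs
  have hcard : (s.card : ℝ) = 2 * H.edgeFinset.card := by
    rw [hs]
    exact_mod_cast (SimpleGraph.two_mul_card_edgeFinset H).symm
  have hNpos : (0:ℝ) < 2 * H.edgeFinset.card := by
    have : 0 < H.edgeFinset.card := Finset.card_pos.mpr hne
    positivity
  have hgv : ∀ φ : V → I → O, G.graphValue H φ ≤ G.classicalValue := by
    intro φ
    rw [SymGame.graphValue, div_le_iff₀ hNpos]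
    calc ∑ p ∈ s, G.pairValue (φ p.1) (φ p.2)
        ≤ ∑ _p ∈ s, G.classicalValue := Finset.sum_le_sum fun p _ => pairValue_le G _ _
      _ = s.card * G.classicalValue := by rw [Finset.sum_const, nsmul_eq_mul]
      _ = G.classicalValue * (2 * H.edgeFinset.card) := by rw [hcard]; ring
  constructor
  · intro h
    obtain ⟨φ, hφ⟩ := exists_eq_ciSup_of_finite (f := fun φ : V → I → O => G.graphValue H φ)
    have hφval : G.graphValue H φ = G.classicalValue := by
      rw [hφ]; exact h
    refine ⟨φ, fun u w huw => ?_⟩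
    have hsum : ∑ p ∈ s, G.pairValue (φ p.1) (φ p.2) = ∑ _p ∈ s, G.classicalValue := by
      rw [Finset.sum_const, nsmul_eq_mul, hcard]
      have := hφval
      rw [SymGame.graphValue, div_eq_iff (ne_of_gt hNpos)] at this
      rw [this]; ring
    have heach := (Finset.sum_eq_sum_iff_of_le
      (fun p (_ : p ∈ s) => pairValue_le G (φ p.1) (φ p.2))).mp hsum
    have hmem : (u, w) ∈ s := by simp [hs, huw]
    exact heach (u, w) hmem
  · rintro ⟨φ, hφ⟩
    have hval : G.graphValue H φ = G.classicalValue := by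
      rw [SymGame.graphValue, div_eq_iff (ne_of_gt hNpos)]
      have : ∑ p ∈ s, G.pairValue (φ p.1) (φ p.2) = ∑ _p ∈ s, G.classicalValue := by
        refine Finset.sum_congr rfl fun p hp => ?_
        have : H.Adj p.1 p.2 := by simpa [hs] using hp
        exact hφ p.1 p.2 this
      rw [this, Finset.sum_const, nsmul_eq_mul, hcard]; ring
    refine le_antisymm (ciSup_le hgv) ?_
    rw [← hval]
    exact le_ciSup (Set.Finite.bddAbove (Set.finite_range _)) φ
end
end

section
/- Suppose that for every assignment of strategies to three players A, B, C in a row, the average winning probability over the two edges (A,B), (B,C) is at most ν (i.e., the value of G on P3 is at most ν). Then for any connected graph H admitting a fractional P3-decomposition, the value of G^H under any strategy is at most ν. -/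
open scoped Classical

noncomputable section

variable {V : Type*}

/-- If every two-edge (`P₃`) configuration has average winning probability at most `ν`,
then for any connected graph `H` admitting a fractional `P₃`-decomposition, the value of
`G^H` under any strategy (recorded by its edge winning probabilities `ω`) is at most `ν`. -/
theorem p3_bound_lifts_to_graph [Fintype V] (H : SimpleGraph V) (hconn : H.Connected)
    (hne : H.edgeFinset.Nonempty) (hdecomp : H.HasFracP3Decomp)
    (ω : Sym2 V → ℝ) (hω : ∀ e ∈ H.edgeSet, 0 ≤ ω e ∧ ω e ≤ 1) (ν : ℝ)
    (hP3 : ∀ e₁ e₂ : Sym2 V, e₁ ∈ H.edgeSet → e₂ ∈ H.edgeSet → e₁ ≠ e₂ →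
      (∃ v, v ∈ e₁ ∧ v ∈ e₂) → ω e₁ + ω e₂ ≤ 2 * ν) :
    (∑ e ∈ H.edgeFinset, ω e) / H.edgeFinset.card ≤ ν := by
  obtain ⟨f, hf01, hf⟩ := hdecomp
  set S : Finset (Sym2 (Sym2 V)) :=
    Finset.univ.filter (fun K : Sym2 (Sym2 V) => H.IsP3Sub K) with hS
  -- swap sums
  have swap : ∀ g : Sym2 V → ℝ,
      ∑ e ∈ H.edgeFinset, g e
      = ∑ K ∈ S, f K * ∑ e ∈ H.edgeFinset.filter (fun e => e ∈ K), g e := by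
    intro g
    have h1 : ∀ e ∈ H.edgeFinset, g e = ∑ K ∈ S.filter (fun K => e ∈ K), f K * g e := by
      intro e he
      rw [← Finset.sum_mul]
      have : S.filter (fun K => e ∈ K)
          = Finset.univ.filter (fun K : Sym2 (Sym2 V) => H.IsP3Sub K ∧ e ∈ K) := by
        rw [hS, Finset.filter_filter]
      rw [this, hf e (SimpleGraph.mem_edgeFinset.mp he), one_mul]
    rw [Finset.sum_congr rfl h1]
    have h2 : ∑ e ∈ H.edgeFinset, ∑ K ∈ S.filter (fun K => e ∈ K), f K * g e
        = ∑ e ∈ H.edgeFinset, ∑ K ∈ S, if e ∈ K then f K * g e else 0 := by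
      refine Finset.sum_congr rfl fun e _ => ?_
      rw [Finset.sum_filter]
    rw [h2, Finset.sum_comm]
    refine Finset.sum_congr rfl fun K _ => ?_
    rw [Finset.mul_sum, ← Finset.sum_filter]
  -- for each K in S, the inner filter is a pair
  have hpair : ∀ K ∈ S, ∃ e₁ e₂ : Sym2 V, e₁ ∈ H.edgeSet ∧ e₂ ∈ H.edgeSet ∧ e₁ ≠ e₂ ∧
      (∃ v, v ∈ e₁ ∧ v ∈ e₂) ∧
      ∀ g : Sym2 V → ℝ, ∑ e ∈ H.edgeFinset.filter (fun e => e ∈ K), g e = g e₁ + g e₂ := by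
    intro K hK
    rw [hS, Finset.mem_filter] at hK
    obtain ⟨e₁, e₂, rfl, he₁, he₂, hne12, hv⟩ := hK.2
    refine ⟨e₁, e₂, he₁, he₂, hne12, hv, fun g => ?_⟩
    have : H.edgeFinset.filter (fun e => e ∈ s(e₁, e₂)) = {e₁, e₂} := by
      ext e
      simp only [Finset.mem_filter, Sym2.mem_iff, Finset.mem_insert, Finset.mem_singleton]
      constructor
      · rintro ⟨-, h⟩; exact h
      · rintro (rfl | rfl)
        · exact ⟨SimpleGraph.mem_edgeFinset.mpr he₁, Or.inl rfl⟩
        · exact ⟨SimpleGraph.mem_edgeFinset.mpr he₂, Or.inr rfl⟩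
    rw [this, Finset.sum_pair hne12]
  -- total weight
  have hcard : (H.edgeFinset.card : ℝ) = ∑ K ∈ S, f K * 2 := by
    have := swap (fun _ => (1 : ℝ))
    simp only [Finset.sum_const, nsmul_eq_mul, mul_one] at this
    rw [this]
    refine Finset.sum_congr rfl fun K hK => ?_
    obtain ⟨e₁, e₂, -, -, -, -, hsum⟩ := hpair K hK
    have := hsum (fun _ => (1 : ℝ))
    simp only [Finset.sum_const, nsmul_eq_mul, mul_one] at this ⊢
    rw [this]; norm_num
  -- main bound
  have hmain : ∑ e ∈ H.edgeFinset, ω e ≤ ν * H.edgeFinset.card := by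
    rw [swap ω, hcard, Finset.mul_sum]
    refine Finset.sum_le_sum fun K hK => ?_
    obtain ⟨e₁, e₂, he₁, he₂, hne12, hv, hsum⟩ := hpair K hK
    rw [hsum ω]
    have hb := hP3 e₁ e₂ he₁ he₂ hne12 hv
    have hf0 := (hf01 K).1
    calc f K * (ω e₁ + ω e₂) ≤ f K * (2 * ν) := by
          exact mul_le_mul_of_nonneg_left hb hf0
      _ = ν * (f K * 2) := by ring
  have hpos : (0 : ℝ) < H.edgeFinset.card := by
    exact_mod_cast Finset.card_pos.mpr hne
  rw [div_le_iff₀ hpos]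
  exact hmain
end
end

section
/- For self-adjoint operators A0, A1 on H_A, B0, B1 on H_B, C0, C1 on H_C, each with operator norm at most 1 (e.g., ±1-valued observables), satisfying the commutation relations that operators of different parties commute, the operator inequality B_AB + B_BC ≤ 4·Id holds, where B_AB = A0B0 + A0B1 + A1B0 − A1B1 and B_BC = B0C0 + B0C1 + B1C0 − B1C1. Equivalently, 2 − (1/2)(B_AB + B_BC) is a sum of squares of self-adjoint operators. -/
private theorem chsh_p3_key {A : Type*} [Ring A] (A₀ A₁ B₀ B₁ C₀ C₁ : A)
    (sA0 : A₀ * A₀ = 1) (sA1 : A₁ * A₁ = 1) (sB0 : B₀ * B₀ = 1) (sB1 : B₁ * B₁ = 1)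
    (sC0 : C₀ * C₀ = 1) (sC1 : C₁ * C₁ = 1)
    (cA0B0 : Commute A₀ B₀) (cA0B1 : Commute A₀ B₁)
    (cA1B0 : Commute A₁ B₀) (cA1B1 : Commute A₁ B₁)
    (cA0C1 : Commute A₀ C₁) (cA1C0 : Commute A₁ C₀)
    (cB0C0 : Commute B₀ C₀) (cB0C1 : Commute B₀ C₁)
    (cB1C0 : Commute B₁ C₀) (cB1C1 : Commute B₁ C₁) :
    (A₀ * B₀ - A₀ * B₁ + C₁ * B₀ + C₁ * B₁ - (A₀ * C₁ + A₀ * C₁)) *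
      (A₀ * B₀ - A₀ * B₁ + C₁ * B₀ + C₁ * B₁ - (A₀ * C₁ + A₀ * C₁)) +
    (A₁ * B₀ + A₁ * B₁ + C₀ * B₀ - C₀ * B₁ - (A₁ * C₀ + A₁ * C₀)) *
      (A₁ * B₀ + A₁ * B₁ + C₀ * B₀ - C₀ * B₁ - (A₁ * C₀ + A₁ * C₀)) =
    16 - (4 : ℤ) • ((A₀ * B₀ + A₀ * B₁ + A₁ * B₀ - A₁ * B₁) +
          (B₀ * C₀ + B₀ * C₁ + B₁ * C₀ - B₁ * C₁)) := by
  have sw : ∀ {a b : A}, Commute a b → ∀ x, b * (a * x) = a * (b * x) := fun h x => by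
    rw [← mul_assoc, ← h.eq, mul_assoc]
  have sq' : ∀ {a : A}, a * a = 1 → ∀ x, a * (a * x) = x := fun h x => by
    rw [← mul_assoc, h, one_mul]
  simp only [mul_add, add_mul, mul_sub, sub_mul, mul_assoc,
    cA0B0.symm.eq, cA0B1.symm.eq, cA1B0.symm.eq, cA1B1.symm.eq,
    cA0C1.symm.eq, cA1C0.symm.eq, cB0C0.symm.eq, cB0C1.symm.eq,
    cB1C0.symm.eq, cB1C1.symm.eq,
    sw cA0B0, sw cA0B1, sw cA1B0, sw cA1B1, sw cA0C1, sw cA1C0,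
    sw cB0C0, sw cB0C1, sw cB1C0, sw cB1C1,
    sq' sA0, sq' sA1, sq' sB0, sq' sB1, sq' sC0, sq' sC1,
    sA0, sA1, sB0, sB1, sC0, sC1, mul_one, one_mul]
  abel_nf
  simp
  abel

/-- Tsirelson-type monogamy on `P₃`: for `±1`-observables of three parties `A`, `B`, `C`
(self-adjoint involutions, with operators of different parties commuting), the Bell
operator inequality `B_AB + B_BC ≤ 4·1` holds; equivalently, `2 - (1/2)(B_AB + B_BC)` is
a sum of squares of self-adjoint operators. -/
theorem chsh_p3_monogamy {A : Type*} [Ring A] [StarRing A] [PartialOrder A]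
    [StarOrderedRing A] [Algebra ℝ A] [StarModule ℝ A]
    (A₀ A₁ B₀ B₁ C₀ C₁ : A)
    (hA₀ : IsSelfAdjoint A₀) (hA₁ : IsSelfAdjoint A₁)
    (hB₀ : IsSelfAdjoint B₀) (hB₁ : IsSelfAdjoint B₁)
    (hC₀ : IsSelfAdjoint C₀) (hC₁ : IsSelfAdjoint C₁)
    (hA₀2 : A₀ ^ 2 = 1) (hA₁2 : A₁ ^ 2 = 1) (hB₀2 : B₀ ^ 2 = 1) (hB₁2 : B₁ ^ 2 = 1)
    (hC₀2 : C₀ ^ 2 = 1) (hC₁2 : C₁ ^ 2 = 1)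
    (hAB : ∀ X ∈ ({A₀, A₁} : Set A), ∀ Y ∈ ({B₀, B₁} : Set A), Commute X Y)
    (hAC : ∀ X ∈ ({A₀, A₁} : Set A), ∀ Y ∈ ({C₀, C₁} : Set A), Commute X Y)
    (hBC : ∀ X ∈ ({B₀, B₁} : Set A), ∀ Y ∈ ({C₀, C₁} : Set A), Commute X Y) :
    (A₀ * B₀ + A₀ * B₁ + A₁ * B₀ - A₁ * B₁) +
        (B₀ * C₀ + B₀ * C₁ + B₁ * C₀ - B₁ * C₁) ≤ (4 : A) ∧
      ∃ Q₁ Q₂ : A, IsSelfAdjoint Q₁ ∧ IsSelfAdjoint Q₂ ∧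
        (2 : A) - (1 / 2 : ℝ) • ((A₀ * B₀ + A₀ * B₁ + A₁ * B₀ - A₁ * B₁) +
          (B₀ * C₀ + B₀ * C₁ + B₁ * C₀ - B₁ * C₁)) = Q₁ ^ 2 + Q₂ ^ 2 := by
  -- extract commutation facts
  have cA0B0 : Commute A₀ B₀ := hAB A₀ (by simp) B₀ (by simp)
  have cA0B1 : Commute A₀ B₁ := hAB A₀ (by simp) B₁ (by simp)
  have cA1B0 : Commute A₁ B₀ := hAB A₁ (by simp) B₀ (by simp)
  have cA1B1 : Commute A₁ B₁ := hAB A₁ (by simp) B₁ (by simp)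
  have cA0C1 : Commute A₀ C₁ := hAC A₀ (by simp) C₁ (by simp)
  have cA1C0 : Commute A₁ C₀ := hAC A₁ (by simp) C₀ (by simp)
  have cB0C0 : Commute B₀ C₀ := hBC B₀ (by simp) C₀ (by simp)
  have cB0C1 : Commute B₀ C₁ := hBC B₀ (by simp) C₁ (by simp)
  have cB1C0 : Commute B₁ C₀ := hBC B₁ (by simp) C₀ (by simp)
  have cB1C1 : Commute B₁ C₁ := hBC B₁ (by simp) C₁ (by simp)
  have sA0 : A₀ * A₀ = 1 := by rw [← sq]; exact hA₀2
  have sA1 : A₁ * A₁ = 1 := by rw [← sq]; exact hA₁2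
  have sB0 : B₀ * B₀ = 1 := by rw [← sq]; exact hB₀2
  have sB1 : B₁ * B₁ = 1 := by rw [← sq]; exact hB₁2
  have sC0 : C₀ * C₀ = 1 := by rw [← sq]; exact hC₀2
  have sC1 : C₁ * C₁ = 1 := by rw [← sq]; exact hC₁2
  set S : A := (A₀ * B₀ + A₀ * B₁ + A₁ * B₀ - A₁ * B₁) +
      (B₀ * C₀ + B₀ * C₁ + B₁ * C₀ - B₁ * C₁) with hS
  set X : A := A₀ * B₀ - A₀ * B₁ + C₁ * B₀ + C₁ * B₁ - (A₀ * C₁ + A₀ * C₁) with hX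
  set Y : A := A₁ * B₀ + A₁ * B₁ + C₀ * B₀ - C₀ * B₁ - (A₁ * C₀ + A₁ * C₀) with hY
  have key : X * X + Y * Y = 16 - (4 : ℤ) • S :=
    chsh_p3_key A₀ A₁ B₀ B₁ C₀ C₁ sA0 sA1 sB0 sB1 sC0 sC1
      cA0B0 cA0B1 cA1B0 cA1B1 cA0C1 cA1C0 cB0C0 cB0C1 cB1C0 cB1C1
  have saX : IsSelfAdjoint X := by
    simp only [IsSelfAdjoint, hX, star_sub, star_add, star_mul,
      hA₀.star_eq, hA₁.star_eq, hB₀.star_eq, hB₁.star_eq, hC₀.star_eq, hC₁.star_eq,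
      ← cA0B0.eq, ← cA0B1.eq, ← cA0C1.eq, cB0C1.eq, cB1C1.eq]
  have saY : IsSelfAdjoint Y := by
    simp only [IsSelfAdjoint, hY, star_sub, star_add, star_mul,
      hA₀.star_eq, hA₁.star_eq, hB₀.star_eq, hB₁.star_eq, hC₀.star_eq, hC₁.star_eq,
      ← cA1B0.eq, ← cA1B1.eq, ← cA1C0.eq, cB0C0.eq, cB1C0.eq]
  -- a general lemma: for any c : ℝ, (c • X)^2 + (c • Y)^2 = (c^2) • (16 - 4 • S)
  have sqsum : ∀ c : ℝ, (c • X) ^ 2 + (c • Y) ^ 2 = (c ^ 2) • ((16 : A) - (4 : ℤ) • S) := by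
    intro c
    rw [smul_pow, smul_pow, ← smul_add, sq X, sq Y, key]
  have h16 : ∀ c : ℝ, c • (16 : A) = algebraMap ℝ A (c * 16) := by
    intro c
    rw [← map_ofNat (algebraMap ℝ A) 16, Algebra.smul_def, ← map_mul]
  have h4 : ∀ c : ℝ, c • ((4 : ℤ) • S) = (c * 4) • S := by
    intro c
    rw [← Int.cast_smul_eq_zsmul ℝ, ← mul_smul]
    norm_num
  have smulSA : ∀ (c : ℝ) {x : A}, IsSelfAdjoint x → IsSelfAdjoint (c • x) := by
    intro c x hx
    simp [IsSelfAdjoint, star_smul, hx.star_eq]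
  constructor
  · -- inequality: 0 ≤ 4 - S since 4 - S = ((1/2)•X)^2 + ((1/2)•Y)^2
    apply le_of_sub_nonneg
    have e : (4 : A) - S = ((1 / 2 : ℝ) • X) ^ 2 + ((1 / 2 : ℝ) • Y) ^ 2 := by
      rw [sqsum, smul_sub, h16, h4]
      norm_num
      simp [map_ofNat]
    rw [e]
    have nX : (0 : A) ≤ ((1 / 2 : ℝ) • X) ^ 2 := by
      have : IsSelfAdjoint ((1 / 2 : ℝ) • X) := smulSA _ saX
      simpa [sq, star_smul, saX.star_eq] using star_mul_self_nonneg ((1 / 2 : ℝ) • X)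
    have nY : (0 : A) ≤ ((1 / 2 : ℝ) • Y) ^ 2 := by
      have : IsSelfAdjoint ((1 / 2 : ℝ) • Y) := smulSA _ saY
      simpa [sq, star_smul, saY.star_eq] using star_mul_self_nonneg ((1 / 2 : ℝ) • Y)
    exact add_nonneg nX nY
  · -- SOS decomposition with c = √(1/8)
    refine ⟨(Real.sqrt (1 / 8)) • X, (Real.sqrt (1 / 8)) • Y,
      smulSA _ saX, smulSA _ saY, ?_⟩
    rw [sqsum, Real.sq_sqrt (by norm_num : (0:ℝ) ≤ 1 / 8), smul_sub, h16, h4]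
    norm_num
    simp [map_ofNat]
end

section
/- Suppose a symmetric two-player game G has no quantum advantage on P3 and on every graph in T_k for some fixed k ≥ 2 (i.e., quantum value equals classical value equals ω(G) on those graphs). If every graph H in T_{k+1} decomposes as an edge-disjoint union of a subgraph H1 ∈ T_k and a subgraph H2 with an even number of edges admitting a fractional P3-decomposition, then the value of G^H is a convex combination (with weights |E1|/|E| and (|E|−|E1|)/|E|) of the values of G^{H1} and G^{H2}, each bounded by ω(G); hence G has no quantum advantage on any graph in T_{k+1}. -/
open scoped Classical

noncomputable section

variable {V : Type*}

/-- Inductive step for the `T_k` families. Let `H ∈ T_{k+1}` and let `H₁` be a subgraph of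
`H` in `T_k`, with complementary graph `H₂ = H \ E(H₁)` admitting a fractional
`P₃`-decomposition. Suppose a (quantum) strategy has edge winning probabilities
`ω : Sym2 V → [0,1]` with no advantage on `P₃` (every pair of incident edges averages at
most the classical value `c`) and no advantage on `H₁` (average over `E₁` at most `c`).
Then the value of `G^H` is the convex combination, with weights `|E₁|/|E|` and
`(|E|-|E₁|)/|E|`, of the values on `H₁` and `H₂`, and hence is at most `c`. -/
theorem tk_inductive_step [Fintype V] (H : SimpleGraph V) (k : ℕ) (hk : 2 ≤ k)
    (hH : H.InTk (k + 1)) (H₁ : H.Subgraph) (hH₁ : H₁.coe.InTk k)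
    (hdecomp : (H.deleteEdges H₁.edgeSet).HasFracP3Decomp)
    (ω : Sym2 V → ℝ) (hω : ∀ e ∈ H.edgeSet, 0 ≤ ω e ∧ ω e ≤ 1) (c : ℝ)
    (hP3 : ∀ e₁ e₂ : Sym2 V, e₁ ∈ H.edgeSet → e₂ ∈ H.edgeSet → e₁ ≠ e₂ →
      (∃ v, v ∈ e₁ ∧ v ∈ e₂) → ω e₁ + ω e₂ ≤ 2 * c)
    (hTk : (∑ e ∈ H₁.edgeSet.toFinset, ω e) / H₁.edgeSet.toFinset.card ≤ c) :
    ((∑ e ∈ H.edgeFinset, ω e) / H.edgeFinset.card =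
        (H₁.edgeSet.toFinset.card / H.edgeFinset.card) *
          ((∑ e ∈ H₁.edgeSet.toFinset, ω e) / H₁.edgeSet.toFinset.card) +
        ((H.deleteEdges H₁.edgeSet).edgeFinset.card / H.edgeFinset.card) *
          ((∑ e ∈ (H.deleteEdges H₁.edgeSet).edgeFinset, ω e) /
            (H.deleteEdges H₁.edgeSet).edgeFinset.card)) ∧
      (∑ e ∈ H.edgeFinset, ω e) / H.edgeFinset.card ≤ c := by
  classical
  obtain ⟨f, hf01, hf⟩ := hdecomp
  set S := H.deleteEdges H₁.edgeSet with hS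
  set A := H₁.edgeSet.toFinset with hA
  set B := S.edgeFinset with hB
  set E := H.edgeFinset with hE
  have hSsub : S.edgeSet ⊆ H.edgeSet := by
    rw [hS, SimpleGraph.edgeSet_deleteEdges]; exact Set.diff_subset
  have hAE : A ⊆ E := by
    intro e he
    simp only [hA, Set.mem_toFinset] at he
    exact SimpleGraph.mem_edgeFinset.mpr (H₁.edgeSet_subset he)
  have hBE : B = E \ A := by
    ext e
    simp [hB, hA, hE, SimpleGraph.mem_edgeFinset, hS, SimpleGraph.edgeSet_deleteEdges,
      Finset.mem_sdiff, Set.mem_toFinset, and_comm]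
  -- A is nonempty
  have hAne : A.Nonempty := by
    obtain ⟨-, F, -, -, hall, hcard⟩ := hH₁
    have hne : Nonempty {c : (H₁.coe.deleteEdges ↑F).ConnectedComponent //
        (H₁.coe.deleteEdges ↑F).IsP2Component c} := by
      by_contra h
      rw [not_nonempty_iff] at h
      rw [Nat.card_of_isEmpty] at hcard
      omega
    obtain ⟨⟨comp, hcomp⟩⟩ := hne
    obtain ⟨u, v, huv, -⟩ := hcomp
    have hcoe : H₁.coe.Adj u v := (SimpleGraph.deleteEdges_adj.mp huv).1
    have hadj : H₁.Adj ↑u ↑v := hcoe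
    exact ⟨s(↑u, ↑v), by simp [hA, Set.mem_toFinset, H₁.mem_edgeSet, hadj]⟩
  have hA0 : (0:ℝ) < A.card := by exact_mod_cast Finset.card_pos.mpr hAne
  have hEne : E.Nonempty := ⟨hAne.choose, hAE hAne.choose_spec⟩
  have hE0 : (0:ℝ) < E.card := by exact_mod_cast Finset.card_pos.mpr hEne
  have hsplit : ∑ e ∈ E, ω e = ∑ e ∈ A, ω e + ∑ e ∈ B, ω e := by
    rw [hBE, ← Finset.sum_sdiff hAE]; ring
  have hc : A.card + B.card = E.card := by
    rw [hBE, Finset.card_sdiff_of_subset hAE]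
    exact Nat.add_sub_cancel' (Finset.card_le_card hAE)
  -- bound on B via fractional P3 decomposition
  have hBle : ∑ e ∈ B, ω e ≤ c * B.card := by
    have h1 : ∑ e ∈ B, ω e
        = ∑ K ∈ Finset.univ, ∑ e ∈ B, (if S.IsP3Sub K ∧ e ∈ K then f K * ω e else 0) := by
      rw [Finset.sum_comm]
      refine Finset.sum_congr rfl fun e he => ?_
      have h := hf e (SimpleGraph.mem_edgeFinset.mp he)
      calc ω e = (∑ K ∈ Finset.univ.filter (fun K => S.IsP3Sub K ∧ e ∈ K), f K) * ω e := by
            rw [h, one_mul]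
        _ = ∑ K ∈ Finset.univ, (if S.IsP3Sub K ∧ e ∈ K then f K * ω e else 0) := by
            rw [Finset.sum_filter, Finset.sum_mul]
            exact Finset.sum_congr rfl fun K _ => by split <;> simp
    have h2 : c * (B.card : ℝ)
        = ∑ K ∈ Finset.univ, ∑ e ∈ B, (if S.IsP3Sub K ∧ e ∈ K then f K * c else 0) := by
      rw [Finset.sum_comm]
      have : c * (B.card : ℝ) = ∑ e ∈ B, c := by
        rw [Finset.sum_const, nsmul_eq_mul, mul_comm]
      rw [this]
      refine Finset.sum_congr rfl fun e he => ?_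
      calc c = (∑ K ∈ Finset.univ.filter (fun K => S.IsP3Sub K ∧ e ∈ K), f K) * c := by
            rw [hf e (SimpleGraph.mem_edgeFinset.mp he), one_mul]
        _ = ∑ K ∈ Finset.univ, (if S.IsP3Sub K ∧ e ∈ K then f K * c else 0) := by
            rw [Finset.sum_filter, Finset.sum_mul]
            exact Finset.sum_congr rfl fun K _ => by split <;> simp
    rw [h1, h2]
    refine Finset.sum_le_sum fun K _ => ?_
    by_cases hP : S.IsP3Sub K
    · simp only [hP, true_and]
      obtain ⟨e₁, e₂, hK, he₁, he₂, hne, v, hv₁, hv₂⟩ := hP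
      have hm₁ : e₁ ∈ B := SimpleGraph.mem_edgeFinset.mpr he₁
      have hm₂ : e₂ ∈ B := SimpleGraph.mem_edgeFinset.mpr he₂
      have hfilt : B.filter (fun e => e ∈ K) = {e₁, e₂} := by
        ext e
        simp only [Finset.mem_filter, Finset.mem_insert, Finset.mem_singleton, hK,
          Sym2.mem_iff]
        constructor
        · rintro ⟨-, h⟩; exact h
        · rintro (rfl | rfl)
          · exact ⟨hm₁, Or.inl rfl⟩
          · exact ⟨hm₂, Or.inr rfl⟩
      rw [← Finset.sum_filter, ← Finset.sum_filter, hfilt, Finset.sum_pair hne,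
        Finset.sum_pair hne]
      have hle := hP3 e₁ e₂ (hSsub he₁) (hSsub he₂) hne ⟨v, hv₁, hv₂⟩
      nlinarith [(hf01 K).1]
    · simp [hP]
  have hAc : ∑ e ∈ A, ω e ≤ c * A.card := by
    rw [div_le_iff₀ hA0] at hTk; linarith
  constructor
  · have t1 : ((A.card : ℝ) / E.card) * ((∑ e ∈ A, ω e) / A.card)
        = (∑ e ∈ A, ω e) / E.card := by
      rw [div_mul_div_comm, mul_comm ((E.card:ℝ)) _, mul_div_mul_left _ _ (ne_of_gt hA0)]
    have t2 : ((B.card : ℝ) / E.card) * ((∑ e ∈ B, ω e) / B.card)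
        = (∑ e ∈ B, ω e) / E.card := by
      by_cases hb : (B.card : ℝ) = 0
      · have hBemp : B = ∅ := Finset.card_eq_zero.mp (by exact_mod_cast hb)
        simp [hb, hBemp]
      · rw [div_mul_div_comm, mul_comm ((E.card:ℝ)) _, mul_div_mul_left _ _ hb]
    rw [t1, t2, hsplit, add_div]
  · rw [div_le_iff₀ hE0, hsplit]
    have : ((E.card : ℝ)) = A.card + B.card := by exact_mod_cast hc.symm
    rw [this]
    have hB0 : (0:ℝ) ≤ B.card := by positivity
    nlinarith
end
end
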